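/- (Orthogonality and unitarity relations for the Berezin–Weil–Zak transform.) For all λ₁, λ₂ ∈ ℤ∖{0}, all q₁, q₂ ∈ ℤ, and all Schwartz functions h₁, h₂ : ℝ → ℂ, one has ∫_{[0,1]³} BWZ_{λ₁,q₁}(h₁)(a,b,c) · conj(BWZ_{λ₂,q₂}(h₂)(a,b,c)) da db dc = ∫_ℝ h₁(u) conj(h₂(u)) du if λ₁ = λ₂ and q₁ ≡ q₂ (mod λ₁), and = 0 otherwise. -/

import Mathlib

/-!
Write `e(x) = e^{2πix}` and `BWZ_{λ,q}(h)(a,b,c) = (√|λ|/λ) e(λc) Z(a,b)`, where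
`Z(a,b) = ∑ₖ e(-qk/λ) h(k/λ + a) e(kb)` is an absolutely convergent Fourier series in `b`.
The `c`-integral is `δ_{λ₁λ₂}` by orthogonality of characters, and the `b`-integral is Parseval's
identity for `Z`, leaving `∫₀¹ ∑ₖ e((q₂-q₁)k/λ) (h₁ h̄₂)(k/λ + a) da`. Splitting `k = mλ + r` by
residues, the character is constant on each class and the intervals `[(mλ+r)/λ, (mλ+r)/λ + 1]`
tile `ℝ`, so each class contributes `e((q₂-q₁)r/λ) ∫ h₁ h̄₂`. The character sum over `r < |λ|` is
`|λ|` or `0` according as `λ ∣ q₂ - q₁`, and `|λ|` cancels `(√|λ|/λ)²`.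
-/

open MeasureTheory Real Complex
open scoped ComplexConjugate Classical

/-- The generalised Berezin–Weil–Zak transform
`BWZ_{λ,q}(h)(a,b,c) = (√|λ|/λ) ∑_{k∈ℤ} e^{-2πiqk/λ} e^{2πi(λc+kb)} h(k/λ + a)`. -/
noncomputable def BWZ (lam q : ℤ) (h : ℝ → ℂ) (x : ℝ × ℝ × ℝ) : ℂ :=
  ((Real.sqrt |(lam : ℝ)| : ℝ) / (lam : ℝ) : ℝ) *
    ∑' k : ℤ, Complex.exp (-(2 * (π : ℂ) * Complex.I * (q : ℂ) * (k : ℂ)) / (lam : ℂ)) *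
      Complex.exp (2 * (π : ℂ) * Complex.I * ((lam : ℂ) * (x.2.2 : ℂ) + (k : ℂ) * (x.2.1 : ℂ))) *
      h ((k : ℝ) / (lam : ℝ) + x.1)

open scoped FourierTransform SchwartzMap

lemma Real.fourierChar_eq_one_iff {x : ℝ} : 𝐞 x = 1 ↔ ∃ n : ℤ, x = n := by
  rw [fourierChar_apply', Circle.exp_eq_one]
  refine exists_congr fun n => ?_
  rw [mul_comm (n : ℝ), mul_right_inj' (by positivity)]

lemma Real.fourierChar_intCast (n : ℤ) : 𝐞 n = 1 :=
  fourierChar_eq_one_iff.2 ⟨n, rfl⟩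

lemma Real.integral_Icc_fourierChar_intCast_mul (n : ℤ) :
    ∫ x in Set.Icc (0 : ℝ) 1, (𝐞 (n * x) : ℂ) = if n = 0 then 1 else 0 := by
  rw [integral_Icc_eq_integral_Ioc, ← intervalIntegral.integral_of_le zero_le_one]
  split_ifs with hn
  · simp [hn]
  have hc : 2 * π * I * n ≠ 0 := by simp [pi_ne_zero, hn]
  simp_rw [fourierChar_apply, show ∀ x : ℝ, ((2 * π * (n * x) : ℝ) : ℂ) * I = 2 * π * I * n * x
    from fun x => by push_cast; ring]
  rw [integral_exp_mul_complex hc, ofReal_one, mul_one, ofReal_zero, mul_zero, Complex.exp_zero,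
    show 2 * π * I * n = n * (2 * π * I) by ring, exp_int_mul_two_pi_mul_I, sub_self, zero_div]

lemma Real.integral_Icc_fourierChar_mul_conj (m n : ℤ) :
    ∫ x in Set.Icc (0 : ℝ) 1, (𝐞 (m * x) : ℂ) * conj (𝐞 (n * x) : ℂ) =
      if m = n then 1 else 0 := by
  simp_rw [Circle.starRingEnd_addChar, ← Circle.coe_mul, ← AddChar.map_add_eq_mul,
    ← sub_eq_add_neg, ← sub_mul, ← Int.cast_sub, integral_Icc_fourierChar_intCast_mul, sub_eq_zero]

lemma Real.periodic_fourierChar_mul_div {n : ℤ} (hn : n ≠ 0) (j : ℤ) :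
    Function.Periodic (fun k : ℤ => (𝐞 (j * k / n) : ℂ)) n := by
  intro k
  dsimp only
  rw [Int.cast_add, mul_add, add_div, mul_div_assoc (j : ℝ) (n : ℝ),
    div_self (Int.cast_ne_zero.2 hn), mul_one, AddChar.map_add_eq_mul, fourierChar_intCast,
    mul_one]

lemma Real.sum_range_fourierChar_mul_div {n : ℤ} (hn : n ≠ 0) (j : ℤ) :
    ∑ r ∈ Finset.range n.natAbs, (𝐞 (j * (r : ℤ) / n) : ℂ) =
      if n ∣ j then (n.natAbs : ℂ) else 0 := by
  have hn' : (n : ℝ) ≠ 0 := Int.cast_ne_zero.2 hn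
  have h_pow (r : ℕ) : 𝐞 (j * (r : ℤ) / n) = 𝐞 (j / n) ^ r := by
    rw [← AddChar.map_nsmul_eq_pow, nsmul_eq_mul, Int.cast_natCast]; ring_nf
  simp_rw [h_pow, Circle.coe_pow]
  split_ifs with h_dvd
  · obtain ⟨d, rfl⟩ := h_dvd
    rw [show ((n * d : ℤ) : ℝ) / n = d by push_cast; field_simp, fourierChar_intCast]
    simp
  have h_ne_one : (𝐞 (j / n) : ℂ) ≠ 1 := by
    rw [Ne, Circle.coe_eq_one, fourierChar_eq_one_iff]
    rintro ⟨m, hm⟩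
    refine h_dvd ⟨m, Int.cast_injective (α := ℝ) ?_⟩
    rw [div_eq_iff hn'] at hm
    push_cast; linarith
  have h_period : 𝐞 (j / n) ^ n.natAbs = 1 := by
    have h_abs : (n.natAbs : ℝ) = (n.sign * n : ℤ) := by
      rw [Int.sign_mul_self_eq_natAbs, Int.cast_natCast]
    rw [← AddChar.map_nsmul_eq_pow, nsmul_eq_mul, h_abs]
    convert fourierChar_intCast (n.sign * j) using 2
    push_cast; field_simp
  rw [geom_sum_eq h_ne_one, ← Circle.coe_pow, h_period, Circle.coe_one, sub_self, zero_div]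

theorem Real.integral_Icc_tsum_fourierChar_mul_conj {α β : ℤ → ℂ} (hα : Summable (‖α ·‖))
    (hβ : Summable (‖β ·‖)) :
    ∫ x in Set.Icc (0 : ℝ) 1, (∑' k : ℤ, α k * 𝐞 (k * x)) * conj (∑' l : ℤ, β l * 𝐞 (l * x)) =
      ∑' k : ℤ, α k * conj (β k) := by
  set F : ℤ × ℤ → ℝ → ℂ := fun p x => α p.1 * conj (β p.2) * (𝐞 (p.1 * x) * conj (𝐞 (p.2 * x) : ℂ))
  have hF_norm (p : ℤ × ℤ) (x : ℝ) : ‖F p x‖ = ‖α p.1‖ * ‖β p.2‖ := by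
    simp [F, Circle.norm_coe]
  have hF_sum : Summable fun p : ℤ × ℤ => ‖α p.1‖ * ‖β p.2‖ := by
    simpa only [norm_mul] using hα.mul_norm hβ
  have h_prod (x : ℝ) : (∑' k : ℤ, α k * 𝐞 (k * x)) * conj (∑' l : ℤ, β l * 𝐞 (l * x)) =
      ∑' p, F p x := by
    rw [conj_tsum, tsum_mul_tsum_of_summable_norm (by simpa [Circle.norm_coe] using hα)
      (by simpa [Circle.norm_coe] using hβ)]
    exact tsum_congr fun p => by simp only [F, map_mul]; ring
  have h_int (p : ℤ × ℤ) : ∫ x in Set.Icc (0 : ℝ) 1, F p x =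
      if p.1 = p.2 then α p.1 * conj (β p.1) else 0 := by
    rw [integral_const_mul, integral_Icc_fourierChar_mul_conj]
    split_ifs with h <;> simp [h]
  simp_rw [h_prod]
  rw [← integral_tsum_of_summable_integral_norm
    (fun p => (Continuous.integrableOn_Icc (by fun_prop)))
    (hF_sum.congr fun p => by simp [hF_norm])]
  simp_rw [h_int]
  refine (Function.Injective.tsum_eq (g := fun k : ℤ => (k, k)) (fun k l h => (Prod.mk.inj h).1)
    fun p hp => ⟨p.1, ?_⟩).symm.trans (by simp)
  by_contra h
  exact hp (if_neg fun h' => h (Prod.ext rfl h'))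

lemma SchwartzMap.summable_norm_intCast {F : Type*} [NormedAddCommGroup F] [NormedSpace ℝ F]
    (f : 𝓢(ℝ, F)) : Summable fun k : ℤ => ‖f k‖ := by
  refine summable_of_isBigO (summable_abs_int_rpow one_lt_two) ?_
  simpa [Real.norm_eq_abs, Function.comp_def] using
    ((f.isBigO_cocompact_rpow (-2)).norm_left.comp_tendsto Int.tendsto_coe_cofinite)

lemma SchwartzMap.summable_norm_div_add {F : Type*} [NormedAddCommGroup F] [NormedSpace ℝ F]
    (f : 𝓢(ℝ, F)) {c : ℝ} (hc : c ≠ 0) (a : ℝ) : Summable fun k : ℤ => ‖f (k / c + a)‖ := by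
  simpa [div_eq_mul_inv] using
    (compCLMOfContinuousLinearEquiv ℝ
      (ContinuousLinearEquiv.unitsEquivAut ℝ (Units.mk0 c⁻¹ (inv_ne_zero hc)))
      (compSubConstCLM ℝ (-a) f)).summable_norm_intCast

theorem Int.hasSum_of_hasSum_mul_add {E : Type*} [AddCommMonoid E] [TopologicalSpace E]
    [ContinuousAdd E] {f : ℤ → E} {n : ℤ} (hn : n ≠ 0) {s : ℕ → E}
    (hf : ∀ r < n.natAbs, HasSum (fun m : ℤ => f (m * n + r)) (s r)) :
    HasSum f (∑ r ∈ Finset.range n.natAbs, s r) := by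
  have h_residue (k : ℤ) : ((k % n).toNat : ℤ) = k % n := Int.toNat_of_nonneg (Int.emod_nonneg k hn)
  have h_split :
      f = fun k => ∑ r ∈ Finset.range n.natAbs, if (k % n).toNat = r then f k else 0 := by
    ext k
    rw [Finset.sum_ite_eq, if_pos]
    rw [Finset.mem_range, ← Int.ofNat_lt, h_residue]
    exact Int.emod_lt k hn
  rw [h_split]
  refine hasSum_sum fun r hr => ?_
  have h_inj : Function.Injective fun m : ℤ => m * n + r :=
    fun a b h => mul_right_cancel₀ hn (add_right_cancel h)
  rw [← h_inj.hasSum_iff]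
  · convert hf r (Finset.mem_range.1 hr) using 1
    ext m
    have : (m * n + r) % n = r := by
      rw [add_comm, Int.add_mul_emod_self_right, ← Int.emod_abs, ← Int.natCast_natAbs]
      exact Int.emod_eq_of_lt (Int.natCast_nonneg r) (by exact_mod_cast Finset.mem_range.1 hr)
    simp [this]
  · intro k hk
    rw [if_neg]
    rintro rfl
    exact hk ⟨k / n, by simp only [h_residue]; exact Int.ediv_mul_add_emod k n⟩

theorem MeasureTheory.Integrable.hasSum_integral_Icc_comp_add {E : Type*} [NormedAddCommGroup E]
    [NormedSpace ℝ E] {g : ℝ → E} (hg : Integrable g) (s : ℝ) :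
    HasSum (fun m : ℤ => ∫ a in Set.Icc (0 : ℝ) 1, g (s + m + a)) (∫ x, g x) := by
  convert hg.hasSum_intervalIntegral s using 2 with m
  rw [integral_Icc_eq_integral_Ioc, ← intervalIntegral.integral_of_le zero_le_one,
    intervalIntegral.integral_comp_add_left, add_zero]

theorem MeasureTheory.Integrable.integral_Icc_tsum_mul_comp_div_add {g : ℝ → ℂ}
    (hg : Integrable g) {n : ℤ} (hn : n ≠ 0) {χ : ℤ → ℂ} (hχ : Function.Periodic χ n) :
    ∫ a in Set.Icc (0 : ℝ) 1, ∑' k : ℤ, χ k * g (k / n + a) =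
      (∑ r ∈ Finset.range n.natAbs, χ r) * ∫ x, g x := by
  have h_shift (m : ℤ) (r : ℕ) : (((m * n + r : ℤ) : ℝ) / n) = r / n + m := by
    push_cast; field_simp; ring
  have h_per (m : ℤ) (r : ℕ) : χ (m * n + r) = χ r := by
    rw [add_comm]; exact hχ.int_mul m r
  have h_summable : Summable fun k : ℤ => ∫ a in Set.Icc (0 : ℝ) 1, ‖χ k * g (k / n + a)‖ := by
    refine (Int.hasSum_of_hasSum_mul_add hn (s := fun r => ‖χ r‖ * ∫ x, ‖g x‖)
      fun r _ => ?_).summable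
    simp_rw [norm_mul, integral_const_mul, h_per, h_shift]
    exact (hg.norm.hasSum_integral_Icc_comp_add _).mul_left _
  rw [← integral_tsum_of_summable_integral_norm
    (fun k => ((hg.comp_add_left _).const_mul (χ k)).integrableOn) h_summable]
  simp_rw [integral_const_mul, Finset.sum_mul]
  refine (Int.hasSum_of_hasSum_mul_add hn fun r _ => ?_).tsum_eq
  simp_rw [h_per, h_shift]
  exact (hg.hasSum_integral_Icc_comp_add _).mul_left _

lemma sqrt_abs_div_mul_sqrt_abs_div_mul_natAbs {n : ℤ} (hn : n ≠ 0) :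
    √|(n : ℝ)| / n * (√|(n : ℝ)| / n) * n.natAbs = 1 := by
  have hn' : (n : ℝ) ≠ 0 := Int.cast_ne_zero.2 hn
  rw [div_mul_div_comm, Real.mul_self_sqrt (abs_nonneg _), Nat.cast_natAbs, Int.cast_abs,
    div_mul_eq_mul_div, abs_mul_abs_self, div_self (mul_ne_zero hn' hn')]

namespace BWZ

noncomputable def coeff (lam q : ℤ) (h : ℝ → ℂ) (a : ℝ) (k : ℤ) : ℂ :=
  𝐞 (-q * k / lam) * h (k / lam + a)

noncomputable def zak (lam q : ℤ) (h : ℝ → ℂ) (a b : ℝ) : ℂ :=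
  ∑' k : ℤ, coeff lam q h a k * 𝐞 (k * b)

lemma apply_eq (lam q : ℤ) (h : ℝ → ℂ) (a b c : ℝ) :
    BWZ lam q h (a, b, c) = ((√|(lam : ℝ)| / lam : ℝ) : ℂ) * 𝐞 (lam * c) * zak lam q h a b := by
  rw [BWZ, zak, mul_assoc _ _ (tsum _)]
  congr 1
  rw [← tsum_mul_left]
  refine tsum_congr fun k => ?_
  simp only [coeff, fourierChar_apply]
  push_cast
  rw [show 2 * π * I * (lam * c + k * b) = 2 * π * (lam * c) * I + 2 * π * (k * b) * I by ring,
    Complex.exp_add, show -(2 * π * I * q * k) / lam = 2 * π * (-q * k / lam) * I by ring]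
  ring

lemma summable_norm_coeff {lam : ℤ} (hlam : lam ≠ 0) (q : ℤ) (h : 𝓢(ℝ, ℂ)) (a : ℝ) :
    Summable fun k => ‖coeff lam q h a k‖ := by
  simpa [coeff, Circle.norm_coe] using h.summable_norm_div_add (Int.cast_ne_zero.2 hlam) a

lemma coeff_mul_conj_coeff (lam q₁ q₂ : ℤ) (h₁ h₂ : ℝ → ℂ) (a : ℝ) (k : ℤ) :
    coeff lam q₁ h₁ a k * conj (coeff lam q₂ h₂ a k) =
      𝐞 ((q₂ - q₁ : ℤ) * k / lam) * (h₁ (k / lam + a) * conj (h₂ (k / lam + a))) := by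
  simp only [coeff, map_mul, Circle.starRingEnd_addChar]
  rw [show ((q₂ - q₁ : ℤ) : ℝ) * k / lam = -q₁ * k / lam + -(-q₂ * k / lam) by push_cast; ring,
    AddChar.map_add_eq_mul, Circle.coe_mul]
  ring

lemma integral_Icc_mul_conj (lam₁ lam₂ q₁ q₂ : ℤ) (h₁ h₂ : ℝ → ℂ) (a b : ℝ) :
    ∫ c in Set.Icc (0 : ℝ) 1, BWZ lam₁ q₁ h₁ (a, b, c) * conj (BWZ lam₂ q₂ h₂ (a, b, c)) =
      if lam₁ = lam₂ then
        ((√|(lam₁ : ℝ)| / lam₁ : ℝ) : ℂ) * ((√|(lam₂ : ℝ)| / lam₂ : ℝ) : ℂ) *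
          (zak lam₁ q₁ h₁ a b * conj (zak lam₂ q₂ h₂ a b))
      else 0 := by
  have h_factor (c : ℝ) : BWZ lam₁ q₁ h₁ (a, b, c) * conj (BWZ lam₂ q₂ h₂ (a, b, c)) =
      ((√|(lam₁ : ℝ)| / lam₁ : ℝ) : ℂ) * ((√|(lam₂ : ℝ)| / lam₂ : ℝ) : ℂ) *
        (zak lam₁ q₁ h₁ a b * conj (zak lam₂ q₂ h₂ a b)) *
        ((𝐞 (lam₁ * c) : ℂ) * conj (𝐞 (lam₂ * c) : ℂ)) := by
    rw [apply_eq, apply_eq, map_mul (starRingEnd ℂ), map_mul (starRingEnd ℂ), conj_ofReal]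
    ring
  simp_rw [h_factor]
  rw [integral_const_mul, Real.integral_Icc_fourierChar_mul_conj]
  split_ifs <;> simp

lemma integral_integral_zak_mul_conj {lam : ℤ} (hlam : lam ≠ 0) (q₁ q₂ : ℤ)
    (h₁ h₂ : 𝓢(ℝ, ℂ)) :
    ∫ a in Set.Icc (0 : ℝ) 1, ∫ b in Set.Icc (0 : ℝ) 1,
        zak lam q₁ h₁ a b * conj (zak lam q₂ h₂ a b) =
      (if lam ∣ q₂ - q₁ then (lam.natAbs : ℂ) else 0) * ∫ u, h₁ u * conj (h₂ u) := by
  have h_int : Integrable fun u => h₁ u * conj (h₂ u) :=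
    h₁.integrable.mul_bdd (by fun_prop : Continuous fun u => conj (h₂ u)).aestronglyMeasurable
      (ae_of_all _ fun u => (RCLike.norm_conj _).le.trans (h₂.norm_le_seminorm ℝ u))
  have h_parseval (a : ℝ) : ∫ b in Set.Icc (0 : ℝ) 1, zak lam q₁ h₁ a b * conj (zak lam q₂ h₂ a b) =
      ∑' k : ℤ, 𝐞 ((q₂ - q₁ : ℤ) * k / lam) * (h₁ (k / lam + a) * conj (h₂ (k / lam + a))) := by
    simp_rw [zak, Real.integral_Icc_tsum_fourierChar_mul_conj (summable_norm_coeff hlam q₁ h₁ a)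
      (summable_norm_coeff hlam q₂ h₂ a), coeff_mul_conj_coeff]
  simp_rw [h_parseval]
  rw [h_int.integral_Icc_tsum_mul_comp_div_add hlam (Real.periodic_fourierChar_mul_div hlam _),
    Real.sum_range_fourierChar_mul_div hlam]

end BWZ

theorem BWZ_orthogonality_general (lam₁ lam₂ : ℤ) (hlam₁ : lam₁ ≠ 0)
    (q₁ q₂ : ℤ) (h₁ h₂ : SchwartzMap ℝ ℂ) :
    (∫ a in Set.Icc (0:ℝ) 1, ∫ b in Set.Icc (0:ℝ) 1, ∫ c in Set.Icc (0:ℝ) 1,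
        BWZ lam₁ q₁ (⇑h₁) (a, b, c) * conj (BWZ lam₂ q₂ (⇑h₂) (a, b, c)))
      = if lam₁ = lam₂ ∧ q₁ ≡ q₂ [ZMOD lam₁] then ∫ u : ℝ, h₁ u * conj (h₂ u) else 0 := by
  simp_rw [BWZ.integral_Icc_mul_conj]
  by_cases h_lam : lam₁ = lam₂
  · subst h_lam
    simp only [if_true, true_and, integral_const_mul, BWZ.integral_integral_zak_mul_conj hlam₁,
      Int.modEq_iff_dvd]
    split_ifs
    · rw [← mul_assoc, ← ofReal_mul, ← ofReal_natCast, ← ofReal_mul,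
        sqrt_abs_div_mul_sqrt_abs_div_mul_natAbs hlam₁, ofReal_one, one_mul]
    · simp
  · simp [h_lam]

/-- **Orthogonality and unitarity relations for the Berezin–Weil–Zak transform.** -/
theorem BWZ_orthogonality (lam₁ lam₂ : ℤ) (hlam₁ : lam₁ ≠ 0) (hlam₂ : lam₂ ≠ 0)
    (q₁ q₂ : ℤ) (h₁ h₂ : SchwartzMap ℝ ℂ) :
    (∫ a in Set.Icc (0:ℝ) 1, ∫ b in Set.Icc (0:ℝ) 1, ∫ c in Set.Icc (0:ℝ) 1,
        BWZ lam₁ q₁ (⇑h₁) (a, b, c) * conj (BWZ lam₂ q₂ (⇑h₂) (a, b, c)))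
      = if lam₁ = lam₂ ∧ q₁ ≡ q₂ [ZMOD lam₁] then ∫ u : ℝ, h₁ u * conj (h₂ u) else 0 :=
  BWZ_orthogonality_general lam₁ lam₂ hlam₁ q₁ q₂ h₁ h₂
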